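/- arXiv:math/0604505 — 3 statements merged into one kernel-verified Lean document; each statement's English description precedes it below -/
import Mathlib

section
/- The constant C₂ = ∏_{ν=1}^∞ ζ(2ν) satisfies 1/C₂ = ∏_p p^{1/12} · η(i·log(p)/π), where the product runs over all primes p and η is the Dedekind eta function. -/
/-!
By the Euler product, `ζ(2(ν+1)) = ∏_p (1 - p^{-2(ν+1)})⁻¹`; and at `τ = i log p / π` one has
`e^{2πiτ} = p^{-2}` and `e^{πiτ/12} = p^{-1/12}`, so `p^{1/12} η(τ) = ∏_ν (1 - p^{-2(ν+1)})`.
Thus both sides are iterated products of the same factors, in the two orders. The prime powers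
`p^{ν+1}` are pairwise distinct, so `∑_{p,ν} p^{-2(ν+1)} ≤ ∑_n n^{-2}`: the logarithms of the
factors form an absolutely summable double series, whose iterated sums may be interchanged.
-/

open Complex

/-- The Dedekind eta function η(τ) = e^{πiτ/12} ∏_{ν=1}^∞ (1 − e^{2πiντ}). -/
noncomputable def dedekindEta (τ : ℂ) : ℂ :=
  Complex.exp (Real.pi * Complex.I * τ / 12) *
    ∏' ν : ℕ, (1 - Complex.exp (2 * Real.pi * Complex.I * ((ν : ℂ) + 1) * τ))

theorem Complex.ofReal_tprod_of_multipliable {ι : Type*} {f : ι → ℝ} (hf : Multipliable f) :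
    ((∏' i, f i : ℝ) : ℂ) = ∏' i, (f i : ℂ) :=
  (hf.hasProd.map ofRealHom continuous_ofReal).tprod_eq.symm

namespace Real

variable {β γ : Type*} {f : β × γ → ℝ}

theorem hasProd_tprod_of_summable_log (hf : ∀ x, 0 < f x) (hs : Summable fun x ↦ log (f x)) :
    HasProd (fun b ↦ ∏' c, f (b, c)) (exp (∑' x, log (f x))) := by
  refine (hs.hasSum.prod_fiberwise fun b ↦ (hs.prod_factor b).hasSum).rexp.congr_fun fun b ↦ ?_
  exact (rexp_tsum_eq_tprod (fun c ↦ hf (b, c)) (hs.prod_factor b)).symm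

theorem tprod_tprod_inv_of_summable_log (hf : ∀ x, 0 < f x) (hs : Summable fun x ↦ log (f x)) :
    ∏' c, ∏' b, (f (b, c))⁻¹ = (∏' b, ∏' c, f (b, c))⁻¹ := by
  have hs' : Summable fun x : γ × β ↦ log (f x.swap)⁻¹ := by
    simpa only [log_inv] using hs.neg.prod_symm
  have h := (hasProd_tprod_of_summable_log (fun x ↦ inv_pos.2 (hf x.swap)) hs').tprod_eq
  simp only [Prod.swap_prod_mk] at h
  rw [h, (hasProd_tprod_of_summable_log hf hs).tprod_eq, ← exp_neg, ← tsum_neg]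
  simp only [log_inv]
  exact congrArg exp ((Equiv.prodComm β γ).tsum_eq fun x : γ × β ↦ -log (f x.swap)).symm

end Real

theorem eulerProduct_rpow_neg_hasProd {s : ℝ} (hs : 1 < s) :
    HasProd (fun p : Nat.Primes ↦ (1 - (p : ℝ) ^ (-s))⁻¹) (∑' m : ℕ, ((m : ℝ) + 1) ^ (-s)) := by
  let f : ℕ →*₀ ℝ :=
    { toFun n := (n : ℝ) ^ (-s)
      map_zero' := by rw [Nat.cast_zero, Real.zero_rpow (by linarith)]
      map_one' := by simp
      map_mul' m n := by push_cast; exact Real.mul_rpow m.cast_nonneg n.cast_nonneg }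
  have hsum : Summable (‖f ·‖) := by
    simpa [f, abs_of_nonneg, Real.rpow_nonneg] using Real.summable_nat_rpow.2 (neg_lt_neg hs)
  have h := EulerProduct.eulerProduct_completely_multiplicative_hasProd hsum
  rw [hsum.of_norm.tsum_eq_zero_add] at h
  simpa [f, Real.zero_rpow (by linarith : -s ≠ 0)] using h

theorem summable_prime_rpow_neg_mul_succ {s : ℝ} (hs : 1 < s) :
    Summable fun q : Nat.Primes × ℕ ↦ (q.1 : ℝ) ^ (-(s * ((q.2 : ℝ) + 1))) := by
  have hinj : Function.Injective fun q : Nat.Primes × ℕ ↦ (q.1 : ℕ) ^ (q.2 + 1) := by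
    rintro ⟨p, m⟩ ⟨q, n⟩ h
    obtain ⟨hpq, hmn⟩ := p.2.pow_inj q.2 h
    exact Prod.ext (Subtype.ext hpq) hmn
  refine ((Real.summable_nat_rpow.2 (neg_lt_neg hs)).comp_injective hinj).congr fun q ↦ ?_
  simp only [Function.comp_apply, Nat.cast_pow]
  rw [← Real.rpow_natCast, ← Real.rpow_mul (Nat.cast_nonneg _)]
  push_cast
  ring_nf

theorem dedekindEta_I_mul_log_div_pi {x : ℝ} (hx : 0 < x) :
    (x : ℂ) ^ (1 / 12 : ℂ) * dedekindEta (I * Real.log x / Real.pi)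
      = ∏' ν : ℕ, ((1 - x ^ (-(2 * ((ν : ℝ) + 1))) : ℝ) : ℂ) := by
  have hprefactor :
      (x : ℂ) ^ (1 / 12 : ℂ) * exp (Real.pi * I * (I * Real.log x / Real.pi) / 12) = 1 := by
    rw [cpow_def_of_ne_zero (ofReal_ne_zero.2 hx.ne'), ← ofReal_log hx.le, ← Complex.exp_add]
    convert Complex.exp_zero using 2
    field_simp
    linear_combination (Real.log x : ℂ) * I_sq
  have hfactor (ν : ℕ) : 1 - exp (2 * Real.pi * I * ((ν : ℂ) + 1) * (I * Real.log x / Real.pi))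
      = ((1 - x ^ (-(2 * ((ν : ℝ) + 1))) : ℝ) : ℂ) := by
    rw [Real.rpow_def_of_pos hx]
    push_cast
    congr 2
    field_simp
    linear_combination (Real.log x : ℂ) * I_sq
  rw [dedekindEta, ← mul_assoc, hprefactor, one_mul, tprod_congr hfactor]

/-- 1/C₂ = ∏_p p^{1/12} η(i log p / π), with C₂ = ∏_{ν=1}^∞ ζ(2ν). -/
theorem one_div_C2_eq_eta_prod :
    (1 : ℂ) / ((∏' ν : ℕ, ∑' m : ℕ, ((m : ℝ) + 1) ^ (-(2 * ((ν : ℝ) + 1)))) : ℝ)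
      = ∏' p : {p : ℕ // p.Prime},
          ((p : ℂ) ^ ((1 : ℂ) / 12)) *
            dedekindEta (Complex.I * Real.log (p : ℕ) / Real.pi) := by
  set f : Nat.Primes × ℕ → ℝ := fun q ↦ 1 - (q.1 : ℝ) ^ (-(2 * ((q.2 : ℝ) + 1))) with hf_def
  have hf (q : Nat.Primes × ℕ) : 0 < f q :=
    sub_pos.2 <| Real.rpow_lt_one_of_one_lt_of_neg (mod_cast q.1.2.one_lt)
      (by linarith [q.2.cast_nonneg (α := ℝ)])
  have hs : Summable fun q ↦ Real.log (f q) := by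
    simpa only [hf_def, sub_eq_add_neg] using
      Real.summable_log_one_add_of_summable (summable_prime_rpow_neg_mul_succ one_lt_two).neg
  have hzeta (ν : ℕ) : ∏' p : Nat.Primes, (f (p, ν))⁻¹
      = ∑' m : ℕ, ((m : ℝ) + 1) ^ (-(2 * ((ν : ℝ) + 1))) :=
    (eulerProduct_rpow_neg_hasProd (s := 2 * ((ν : ℝ) + 1))
      (by linarith [ν.cast_nonneg (α := ℝ)])).tprod_eq
  have heta (p : Nat.Primes) :
      (p : ℂ) ^ ((1 : ℂ) / 12) * dedekindEta (I * Real.log (p : ℕ) / Real.pi)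
        = ((∏' ν, f (p, ν) : ℝ) : ℂ) := by
    rw [ofReal_tprod_of_multipliable
      (Real.multipliable_of_summable_log (fun ν ↦ hf (p, ν)) (hs.prod_factor p))]
    exact dedekindEta_I_mul_log_div_pi (mod_cast p.2.pos)
  simp_rw [← hzeta, Real.tprod_tprod_inv_of_summable_log hf hs]
  rw [one_div, ← ofReal_inv, inv_inv,
    ofReal_tprod_of_multipliable (Real.hasProd_tprod_of_summable_log hf hs).multipliable]
  exact (tprod_congr heta).symm
end

section
/- For every integer n ≥ 1, ∏_{ν=1}^{n−1} Γ(ν/n) = (2π)^{(n−1)/2} / √n. -/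
/-!
Write `n = m + 1`. By the reflection formula `Γ(x) Γ(1 - x) = π / sin (π x)`, pairing the factor
for `ν` with the one for `n - ν` shows that the square of the product is
`π ^ m / ∏ sin (π ν / n)`. The sine product is `n / 2 ^ m`, because `2 sin (π ν / n)` is the
modulus of `1 - ζ ^ ν` for `ζ = exp (2 π i / n)`, and `∏_{ν=1}^{m} (1 - ζ ^ ν) = n` is the value
at `1` of `(X ^ n - 1) / (X - 1)`. Taking the positive square root gives the formula.
-/

open Finset Real

lemma prod_Icc_one_eq_prod_range {M : Type*} [CommMonoid M] (f : ℕ → M) (m : ℕ) :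
    ∏ ν ∈ Icc 1 m, f ν = ∏ k ∈ range m, f (k + 1) := by
  rw [← Ico_add_one_right_eq_Icc, prod_Ico_eq_prod_range]
  simp [add_comm]

lemma sin_pi_mul_succ_div_succ_pos {k m : ℕ} (hk : k < m) :
    0 < sin (π * (k + 1) / (m + 1)) := by
  apply sin_pos_of_pos_of_lt_pi (by positivity)
  rw [mul_div_assoc, mul_lt_iff_lt_one_right pi_pos, div_lt_one (by positivity)]
  exact_mod_cast Nat.succ_lt_succ hk

lemma prod_range_two_mul_sin_pi_mul_div (m : ℕ) :
    ∏ k ∈ range m, 2 * sin (π * (k + 1) / (m + 1)) = m + 1 := by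
  have hζ := Complex.isPrimitiveRoot_exp (m + 1) m.succ_ne_zero
  have hnorm := congrArg (‖·‖) hζ.prod_one_sub_pow_eq_order
  simp only [norm_prod] at hnorm
  rw [← Nat.cast_succ, Complex.norm_natCast] at hnorm
  push_cast at hnorm
  refine (prod_congr rfl fun k hk => ?_).trans hnorm
  have harg : ((k + 1 : ℕ) : ℂ) * (2 * π * Complex.I / (m + 1)) =
      Complex.I * ((2 * (π * (k + 1) / (m + 1)) : ℝ) : ℂ) := by
    push_cast
    ring
  have hsin := sin_pi_mul_succ_div_succ_pos (mem_range.mp hk)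
  rw [norm_sub_rev, ← Complex.exp_nat_mul, harg, Complex.norm_exp_I_mul_ofReal_sub_one,
    mul_div_cancel_left₀ _ two_ne_zero, norm_mul, Real.norm_two, Real.norm_of_nonneg hsin.le]

lemma prod_range_Gamma_mul_Gamma_one_sub (m : ℕ) :
    ∏ k ∈ range m, Gamma ((k + 1) / (m + 1)) * Gamma (1 - (k + 1) / (m + 1)) =
      (2 * π) ^ m / (m + 1) := by
  calc _ = ∏ k ∈ range m, 2 * π / (2 * sin (π * (k + 1) / (m + 1))) := by
        refine prod_congr rfl fun k _ => ?_
        rw [Gamma_mul_Gamma_one_sub, mul_div_mul_left _ _ two_ne_zero, mul_div_assoc]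
    _ = (2 * π) ^ m / (m + 1) := by
        rw [prod_div_distrib, prod_const, card_range, prod_range_two_mul_sin_pi_mul_div]

lemma prod_range_Gamma_eq_prod_range_Gamma_one_sub (m : ℕ) :
    ∏ k ∈ range m, Gamma ((k + 1) / (m + 1)) =
      ∏ k ∈ range m, Gamma (1 - (k + 1) / (m + 1)) := by
  rw [← prod_range_reflect]
  refine prod_congr rfl fun k hk => ?_
  rw [Nat.sub_sub, add_comm 1 k, Nat.cast_sub (mem_range.mp hk)]
  congr 1
  field_simp
  push_cast
  ring

lemma prod_range_Gamma_sq (m : ℕ) :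
    (∏ k ∈ range m, Gamma ((k + 1) / (m + 1))) ^ 2 = (2 * π) ^ m / (m + 1) := by
  rw [sq]
  nth_rewrite 2 [prod_range_Gamma_eq_prod_range_Gamma_one_sub]
  rw [← prod_mul_distrib, prod_range_Gamma_mul_Gamma_one_sub]

/-- Euler: ∏_{ν=1}^{n−1} Γ(ν/n) = (2π)^{(n−1)/2}/√n. -/
theorem euler_gamma_prod (n : ℕ) (hn : 1 ≤ n) :
    ∏ ν ∈ Finset.Icc 1 (n - 1), Real.Gamma ((ν : ℝ) / (n : ℝ))
      = (2 * Real.pi) ^ (((n : ℝ) - 1) / 2) / Real.sqrt (n : ℝ) := by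
  obtain ⟨m, rfl⟩ := Nat.exists_eq_add_of_le' hn
  rw [Nat.add_sub_cancel, prod_Icc_one_eq_prod_range]
  push_cast
  have hprod_pos : 0 < ∏ k ∈ range m, Gamma ((k + 1) / (m + 1)) :=
    prod_pos fun k _ => Gamma_pos_of_pos (by positivity)
  rw [← pow_left_inj₀ hprod_pos.le (by positivity) two_ne_zero, prod_range_Gamma_sq, div_pow,
    sq_sqrt (by positivity), ← rpow_mul_natCast (by positivity)]
  norm_num
end

section
/- For every nonnegative integer r and positive integer n, n!^{S_r(n)} · ∏_{ν=1}^n ν^{ν^r} = (∏_{ν=1}^n ν!^{ν^r}) · (∏_{ν=1}^n ν^{S_r(ν)}), where S_r(m) = ∑_{j=1}^m j^r. -/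
open Finset

/-- n!^{S_r(n)} ∏_{ν=1}^n ν^{ν^r} = (∏_{ν=1}^n ν!^{ν^r})(∏_{ν=1}^n ν^{S_r(ν)}),
    where S_r(m) = ∑_{j=1}^m j^r. -/
theorem factorial_power_product_identity (r n : ℕ) (hn : 1 ≤ n) :
    (n.factorial) ^ (∑ j ∈ Finset.Icc 1 n, j ^ r) *
        ∏ ν ∈ Finset.Icc 1 n, ν ^ (ν ^ r)
      = (∏ ν ∈ Finset.Icc 1 n, (ν.factorial) ^ (ν ^ r)) *
          ∏ ν ∈ Finset.Icc 1 n, ν ^ (∑ j ∈ Finset.Icc 1 ν, j ^ r) := by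
  clear hn
  induction n with
  | zero => simp
  | succ n ih =>
      have h : ∀ f : ℕ → ℕ, ∏ ν ∈ Finset.Icc 1 (n + 1), f ν
          = (∏ ν ∈ Finset.Icc 1 n, f ν) * f (n + 1) := by
        intro f
        rw [← Finset.Ico_add_one_right_eq_Icc, Finset.prod_Ico_succ_top (by omega),
          Finset.Ico_add_one_right_eq_Icc]
      have hs : ∑ j ∈ Finset.Icc 1 (n + 1), j ^ r
          = (∑ j ∈ Finset.Icc 1 n, j ^ r) + (n + 1) ^ r := by
        rw [← Finset.Ico_add_one_right_eq_Icc, Finset.sum_Ico_succ_top (by omega),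
          Finset.Ico_add_one_right_eq_Icc]
      rw [h, h, h, hs]
      calc ((n+1).factorial) ^ ((∑ j ∈ Finset.Icc 1 n, j ^ r) + (n+1)^r) *
              ((∏ ν ∈ Finset.Icc 1 n, ν ^ (ν ^ r)) * (n+1) ^ ((n+1)^r))
          = ((n.factorial) ^ (∑ j ∈ Finset.Icc 1 n, j ^ r) *
              ∏ ν ∈ Finset.Icc 1 n, ν ^ (ν ^ r)) *
              ((n+1) ^ ((∑ j ∈ Finset.Icc 1 n, j ^ r) + (n+1)^r) *
               (n.factorial) ^ ((n+1)^r) * (n+1) ^ ((n+1)^r)) := by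
            rw [Nat.factorial_succ, mul_pow, pow_add, pow_add]; ring
        _ = ((∏ ν ∈ Finset.Icc 1 n, (ν.factorial) ^ (ν ^ r)) *
              ∏ ν ∈ Finset.Icc 1 n, ν ^ (∑ j ∈ Finset.Icc 1 ν, j ^ r)) *
              ((n+1) ^ ((∑ j ∈ Finset.Icc 1 n, j ^ r) + (n+1)^r) *
               (n.factorial) ^ ((n+1)^r) * (n+1) ^ ((n+1)^r)) := by rw [ih]
        _ = (∏ ν ∈ Finset.Icc 1 n, (ν.factorial) ^ (ν ^ r)) * ((n+1).factorial) ^ ((n+1)^r) *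
              ((∏ ν ∈ Finset.Icc 1 n, ν ^ (∑ j ∈ Finset.Icc 1 ν, j ^ r)) *
               (n+1) ^ ((∑ j ∈ Finset.Icc 1 n, j ^ r) + (n+1)^r)) := by
            rw [Nat.factorial_succ, mul_pow]; ring
end
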